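/- arXiv:2004.11467 — 9 statements merged into one kernel-verified Lean document; each statement's English description precedes it below -/
import Mathlib

section
/- Let E, P be real inner product spaces, V a real vector space, R : V →ₗ[ℝ] E and D : E →ₗ[ℝ] P linear maps with D ∘ R = 0, and τ > 0. Suppose F, B ∈ E and e ∈ V satisfy D F = 0 and, for every w ∈ E, ⟪F - τ⁻¹ • B - R e, w⟫_E = ⟪D B, D w⟫_P. Then D B = 0. (Abstract form of: if ξ = (B_h^{n+1}, Ê_h^{n+θ}) solves the div-augmented Problem C, then div B_h^{n+1} = 0.) -/
open RealInnerProductSpace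

/-- Abstract form of: if ξ = (B_h^{n+1}, Ê_h^{n+θ}) solves the div-augmented
Problem C, then div B_h^{n+1} = 0. -/
theorem divergence_free_from_problem_C
    {E P V : Type*}
    [NormedAddCommGroup E] [InnerProductSpace ℝ E]
    [NormedAddCommGroup P] [InnerProductSpace ℝ P]
    [AddCommGroup V] [Module ℝ V]
    (R : V →ₗ[ℝ] E) (D : E →ₗ[ℝ] P) (hDR : D ∘ₗ R = 0)
    (τ : ℝ) (hτ : 0 < τ)
    (F B : E) (e : V) (hF : D F = 0)
    (h : ∀ w : E, ⟪F - τ⁻¹ • B - R e, w⟫ = ⟪D B, D w⟫) :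
    D B = 0 := by
  set z := F - τ⁻¹ • B - R e with hz
  have hRe : D (R e) = 0 := by
    have := congrArg (fun f => f e) hDR
    simpa using this
  have hDz : D z = -τ⁻¹ • D B := by
    simp [hz, map_sub, map_smul, hF, hRe, neg_smul]
  have key : ⟪z, z⟫ = -τ⁻¹ * ⟪D B, D B⟫ := by
    have := h z
    rw [hDz] at this
    simpa [real_inner_smul_right] using this
  have h1 : (0:ℝ) ≤ ⟪z, z⟫ := real_inner_self_nonneg
  have h2 : (0:ℝ) ≤ ⟪D B, D B⟫ := real_inner_self_nonneg
  have hτi : 0 < τ⁻¹ := inv_pos.mpr hτ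
  have hBB : ⟪D B, D B⟫ = 0 := by nlinarith [key]
  exact inner_self_eq_zero.mp hBB
end

section
/- Let E, V, P be real inner product spaces, R : V →ₗ[ℝ] E and D : E →ₗ[ℝ] P linear maps with D ∘ R = 0, T : E →ₗ[ℝ] V a linear map, τ > 0 and θ ∈ ℝ. For ξ = (B,e) and η = (w,v) in E × V set a(ξ,η) = τ⁻¹⟪B,w⟫_E + ⟪R e, w⟫_E + ⟪e, v⟫_V + θ⟪T B, v⟫_V - θ⟪B, R v⟫_E and a₀(ξ,η) = a(ξ,η) + ⟪D B, D w⟫_P. Let F ∈ E with D F = 0 and let g : V →ₗ[ℝ] ℝ be a linear functional. Then for ξ = (B,e) ∈ E × V the following are equivalent: (i) for all w ∈ E, τ⁻¹⟪B,w⟫_E + ⟪R e, w⟫_E = ⟪F,w⟫_E and for all v ∈ V, ⟪e,v⟫_V + θ⟪T B, v⟫_V - θ⟪B, R v⟫_E = g(v) (Problem A); (ii) for all η = (w,v), a(ξ,η) = ⟪F,w⟫_E + g(v) (Problem B); (iii) for all η = (w,v), a₀(ξ,η) = ⟪F,w⟫_E + g(v) (Problem C). -/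
open RealInnerProductSpace

/-- Equivalence of Problems A, B and C in the abstract discrete MHD setting. -/
theorem equivalence_problems_ABC
    {E V P : Type*}
    [NormedAddCommGroup E] [InnerProductSpace ℝ E]
    [NormedAddCommGroup V] [InnerProductSpace ℝ V]
    [NormedAddCommGroup P] [InnerProductSpace ℝ P]
    (R : V →ₗ[ℝ] E) (D : E →ₗ[ℝ] P) (hDR : D ∘ₗ R = 0)
    (T : E →ₗ[ℝ] V) (τ : ℝ) (hτ : 0 < τ) (θ : ℝ)
    (F : E) (hF : D F = 0) (g : V →ₗ[ℝ] ℝ)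
    (B : E) (e : V) :
    -- Problem A
    (((∀ w : E, τ⁻¹ * ⟪B, w⟫ + ⟪R e, w⟫ = ⟪F, w⟫) ∧
      (∀ v : V, ⟪e, v⟫ + θ * ⟪T B, v⟫ - θ * ⟪B, R v⟫ = g v))
      ↔
    -- Problem B
     (∀ w : E, ∀ v : V,
        τ⁻¹ * ⟪B, w⟫ + ⟪R e, w⟫ + ⟪e, v⟫ + θ * ⟪T B, v⟫ - θ * ⟪B, R v⟫
          = ⟪F, w⟫ + g v))
    ∧
    -- Problem B ↔ Problem C
    ((∀ w : E, ∀ v : V,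
        τ⁻¹ * ⟪B, w⟫ + ⟪R e, w⟫ + ⟪e, v⟫ + θ * ⟪T B, v⟫ - θ * ⟪B, R v⟫
          = ⟪F, w⟫ + g v)
      ↔
     (∀ w : E, ∀ v : V,
        τ⁻¹ * ⟪B, w⟫ + ⟪R e, w⟫ + ⟪e, v⟫ + θ * ⟪T B, v⟫ - θ * ⟪B, R v⟫
          + ⟪D B, D w⟫ = ⟪F, w⟫ + g v)) := by
  have hDRx : ∀ x : V, D (R x) = 0 := fun x => by
    have := LinearMap.ext_iff.mp hDR x; simpa using this
  constructor
  · constructor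
    · rintro ⟨h1, h2⟩ w v
      have := h1 w
      have := h2 v
      linarith
    · intro hB
      constructor
      · intro w
        have := hB w 0
        simpa [inner_zero_right] using this
      · intro v
        have := hB 0 v
        simpa [inner_zero_right] using this
  · -- B ↔ C: show that under either hypothesis D B = 0
    have key : (∀ w : E, τ⁻¹ * ⟪B, w⟫ + ⟪R e, w⟫ + ⟪D B, D w⟫ = ⟪F, w⟫) → D B = 0 := by
      intro h
      set c : E := τ⁻¹ • B + R e - F with hc
      have hcw : ∀ w : E, ⟪c, w⟫ + ⟪D B, D w⟫ = 0 := by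
        intro w
        have := h w
        simp only [hc, inner_sub_left, inner_add_left, inner_smul_left,
          RCLike.conj_to_real] at *
        linarith
      have hDc : D c = τ⁻¹ • D B := by
        simp [hc, map_add, map_sub, map_smul, hDRx, hF]
      have := hcw (τ • c)
      rw [inner_smul_right, map_smul, hDc, inner_smul_right, inner_smul_right,
        real_inner_self_eq_norm_sq, real_inner_self_eq_norm_sq] at this
      have hτB : τ * (τ⁻¹ * ‖D B‖ ^ 2) = ‖D B‖ ^ 2 := by
        field_simp
      have h0 : τ * ‖c‖ ^ 2 + ‖D B‖ ^ 2 = 0 := by rw [← hτB]; linarith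
      have h1 : ‖D B‖ ^ 2 ≤ 0 := by nlinarith [sq_nonneg ‖c‖, sq_nonneg ‖D B‖]
      have h2 : ‖D B‖ = 0 := by nlinarith [norm_nonneg (D B)]
      exact norm_eq_zero.mp h2
    constructor
    · intro hB w v
      have hDB : D B = 0 := by
        have hcw : ∀ w' : E, ⟪τ⁻¹ • B + R e - F, w'⟫ = 0 := by
          intro w'
          have := hB w' 0
          simp only [inner_zero_right, map_zero, add_zero] at this
          simp only [inner_sub_left, inner_add_left, inner_smul_left,
            RCLike.conj_to_real]
          linarith
        have hc0 : τ⁻¹ • B + R e - F = 0 := by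
          have := hcw (τ⁻¹ • B + R e - F)
          exact inner_self_eq_zero.mp this
        have : D (τ⁻¹ • B + R e - F) = 0 := by rw [hc0]; simp
        rw [map_sub, map_add, map_smul, hDRx, hF] at this
        simp only [add_zero, sub_zero] at this
        have hτ' : τ⁻¹ ≠ 0 := inv_ne_zero hτ.ne'
        exact (smul_eq_zero.mp this).resolve_left hτ'
      rw [hDB]
      simp only [inner_zero_left, add_zero]
      exact hB w v
    · intro hC w v
      have hDB : D B = 0 := by
        apply key
        intro w'
        have := hC w' 0
        simp only [inner_zero_right, map_zero, add_zero] at this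
        linarith [this]
      have := hC w v
      rw [hDB] at this
      simpa using this
end

section
/- Let E, V, P be real inner product spaces, R : V →ₗ[ℝ] E and D : E →ₗ[ℝ] P linear maps, T : E →ₗ[ℝ] V a linear map, and constants c ≥ 0 and C_P ≥ 0 such that ‖T B‖_V ≤ c‖B‖_E for all B ∈ E and ‖v‖_V ≤ C_P‖R v‖_E for all v ∈ V (discrete Poincaré inequality). Fix θ ∈ [0,1]. For ξ = (B,e), η = (w,v) in X = E × V and τ > 0 set a₀(ξ,η) = τ⁻¹⟪B,w⟫_E + ⟪R e,w⟫_E + ⟪e,v⟫_V + θ⟪T B,v⟫_V - θ⟪B,R v⟫_E + ⟪D B,D w⟫_P and ‖(B,e)‖_{X,τ}² = ‖e‖_V² + τ‖R e‖_E² + τ⁻¹‖B‖_E² + ‖D B‖_P². Then for every τ > 0 and all ξ, η ∈ X, a₀(ξ,η) ≤ (4 + θ(1 + c·C_P)) ‖ξ‖_{X,τ} ‖η‖_{X,τ}; in particular the continuity constant is independent of τ. -/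
open RealInnerProductSpace

/-- The squared `X_h` norm: ‖(B,e)‖² = ‖e‖² + τ‖R e‖² + τ⁻¹‖B‖² + ‖D B‖². -/
noncomputable def XnormSq {E V P : Type*}
    [NormedAddCommGroup E] [InnerProductSpace ℝ E]
    [NormedAddCommGroup V] [InnerProductSpace ℝ V]
    [NormedAddCommGroup P] [InnerProductSpace ℝ P]
    (R : V →ₗ[ℝ] E) (D : E →ₗ[ℝ] P) (τ : ℝ) (ξ : E × V) : ℝ :=
  ‖ξ.2‖ ^ 2 + τ * ‖R ξ.2‖ ^ 2 + τ⁻¹ * ‖ξ.1‖ ^ 2 + ‖D ξ.1‖ ^ 2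

private lemma sq_le_of_le {x y : ℝ} (hx : 0 ≤ x) (hy : 0 ≤ y) (h : x ^ 2 ≤ y ^ 2) :
    x ≤ y := by nlinarith

set_option maxHeartbeats 1000000 in
/-- Continuity of the bilinear form a₀ of Problem C, with a constant
independent of the time step τ. -/
theorem continuity_a0
    {E V P : Type*}
    [NormedAddCommGroup E] [InnerProductSpace ℝ E]
    [NormedAddCommGroup V] [InnerProductSpace ℝ V]
    [NormedAddCommGroup P] [InnerProductSpace ℝ P]
    (R : V →ₗ[ℝ] E) (D : E →ₗ[ℝ] P) (T : E →ₗ[ℝ] V)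
    (c C_P : ℝ) (hc : 0 ≤ c) (hCP : 0 ≤ C_P)
    (hT : ∀ B : E, ‖T B‖ ≤ c * ‖B‖)
    (hPoincare : ∀ v : V, ‖v‖ ≤ C_P * ‖R v‖)
    (θ : ℝ) (hθ : θ ∈ Set.Icc (0 : ℝ) 1) :
    ∀ τ : ℝ, 0 < τ → ∀ ξ η : E × V,
      τ⁻¹ * ⟪ξ.1, η.1⟫ + ⟪R ξ.2, η.1⟫ + ⟪ξ.2, η.2⟫ + θ * ⟪T ξ.1, η.2⟫
          - θ * ⟪ξ.1, R η.2⟫ + ⟪D ξ.1, D η.1⟫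
        ≤ (4 + θ * (1 + c * C_P)) *
            Real.sqrt (XnormSq R D τ ξ) * Real.sqrt (XnormSq R D τ η) := by
  intro τ hτ ξ η
  obtain ⟨B, e⟩ := ξ
  obtain ⟨w, v⟩ := η
  have hτi : 0 ≤ τ⁻¹ := inv_nonneg.mpr hτ.le
  set sτ := Real.sqrt τ with hsτdef
  have hsτ : 0 < sτ := Real.sqrt_pos.mpr hτ
  have hsτ2 : sτ ^ 2 = τ := Real.sq_sqrt hτ.le
  -- the two X-norms
  set Sξ := Real.sqrt (XnormSq R D τ (B, e)) with hSξdef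
  set Sη := Real.sqrt (XnormSq R D τ (w, v)) with hSηdef
  have hSξnn : 0 ≤ Sξ := Real.sqrt_nonneg _
  have hSηnn : 0 ≤ Sη := Real.sqrt_nonneg _
  have hXξnn : 0 ≤ XnormSq R D τ (B, e) := by
    unfold XnormSq
    have := mul_nonneg hτ.le (sq_nonneg ‖R e‖)
    have := mul_nonneg hτi (sq_nonneg ‖B‖)
    positivity
  have hXηnn : 0 ≤ XnormSq R D τ (w, v) := by
    unfold XnormSq
    have := mul_nonneg hτ.le (sq_nonneg ‖R v‖)
    have := mul_nonneg hτi (sq_nonneg ‖w‖)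
    positivity
  have hSξ2 : Sξ ^ 2 = XnormSq R D τ (B, e) := Real.sq_sqrt hXξnn
  have hSη2 : Sη ^ 2 = XnormSq R D τ (w, v) := Real.sq_sqrt hXηnn
  have hXξ : XnormSq R D τ (B, e)
      = ‖e‖ ^ 2 + τ * ‖R e‖ ^ 2 + τ⁻¹ * ‖B‖ ^ 2 + ‖D B‖ ^ 2 := rfl
  have hXη : XnormSq R D τ (w, v)
      = ‖v‖ ^ 2 + τ * ‖R v‖ ^ 2 + τ⁻¹ * ‖w‖ ^ 2 + ‖D w‖ ^ 2 := rfl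
  -- component bounds
  have hτinv : τ⁻¹ * τ = 1 := inv_mul_cancel₀ hτ.ne'
  have heξ : ‖e‖ ≤ Sξ := by
    refine sq_le_of_le (norm_nonneg _) hSξnn ?_
    rw [hSξ2, hXξ]
    nlinarith [mul_nonneg hτ.le (sq_nonneg ‖R e‖), mul_nonneg hτi (sq_nonneg ‖B‖),
      sq_nonneg ‖D B‖]
  have hvη : ‖v‖ ≤ Sη := by
    refine sq_le_of_le (norm_nonneg _) hSηnn ?_
    rw [hSη2, hXη]
    nlinarith [mul_nonneg hτ.le (sq_nonneg ‖R v‖), mul_nonneg hτi (sq_nonneg ‖w‖),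
      sq_nonneg ‖D w‖]
  have hReξ : sτ * ‖R e‖ ≤ Sξ := by
    refine sq_le_of_le (mul_nonneg hsτ.le (norm_nonneg _)) hSξnn ?_
    rw [hSξ2, hXξ, mul_pow, hsτ2]
    nlinarith [sq_nonneg ‖e‖, mul_nonneg hτi (sq_nonneg ‖B‖), sq_nonneg ‖D B‖]
  have hRvη : sτ * ‖R v‖ ≤ Sη := by
    refine sq_le_of_le (mul_nonneg hsτ.le (norm_nonneg _)) hSηnn ?_
    rw [hSη2, hXη, mul_pow, hsτ2]
    nlinarith [sq_nonneg ‖v‖, mul_nonneg hτi (sq_nonneg ‖w‖), sq_nonneg ‖D w‖]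
  have hcancelB : τ * (τ⁻¹ * ‖B‖ ^ 2) = ‖B‖ ^ 2 := by
    rw [← mul_assoc, mul_inv_cancel₀ hτ.ne', one_mul]
  have hcancelw : τ * (τ⁻¹ * ‖w‖ ^ 2) = ‖w‖ ^ 2 := by
    rw [← mul_assoc, mul_inv_cancel₀ hτ.ne', one_mul]
  have hBξ : ‖B‖ ≤ sτ * Sξ := by
    refine sq_le_of_le (norm_nonneg _) (mul_nonneg hsτ.le hSξnn) ?_
    rw [mul_pow, hsτ2, hSξ2, hXξ]
    have h1 : 0 ≤ τ * ‖e‖ ^ 2 := mul_nonneg hτ.le (sq_nonneg _)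
    have h2 : 0 ≤ τ * (τ * ‖R e‖ ^ 2) := mul_nonneg hτ.le (mul_nonneg hτ.le (sq_nonneg _))
    have h3 : 0 ≤ τ * ‖D B‖ ^ 2 := mul_nonneg hτ.le (sq_nonneg _)
    nlinarith [hcancelB, h1, h2, h3]
  have hwη : ‖w‖ ≤ sτ * Sη := by
    refine sq_le_of_le (norm_nonneg _) (mul_nonneg hsτ.le hSηnn) ?_
    rw [mul_pow, hsτ2, hSη2, hXη]
    have h1 : 0 ≤ τ * ‖v‖ ^ 2 := mul_nonneg hτ.le (sq_nonneg _)
    have h2 : 0 ≤ τ * (τ * ‖R v‖ ^ 2) := mul_nonneg hτ.le (mul_nonneg hτ.le (sq_nonneg _))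
    have h3 : 0 ≤ τ * ‖D w‖ ^ 2 := mul_nonneg hτ.le (sq_nonneg _)
    nlinarith [hcancelw, h1, h2, h3]
  have hDBξ : ‖D B‖ ≤ Sξ := by
    refine sq_le_of_le (norm_nonneg _) hSξnn ?_
    rw [hSξ2, hXξ]
    nlinarith [sq_nonneg ‖e‖, mul_nonneg hτ.le (sq_nonneg ‖R e‖),
      mul_nonneg hτi (sq_nonneg ‖B‖)]
  have hDwη : ‖D w‖ ≤ Sη := by
    refine sq_le_of_le (norm_nonneg _) hSηnn ?_
    rw [hSη2, hXη]
    nlinarith [sq_nonneg ‖v‖, mul_nonneg hτ.le (sq_nonneg ‖R v‖),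
      mul_nonneg hτi (sq_nonneg ‖w‖)]
  -- product bounds
  have hP1 : τ⁻¹ * (‖B‖ * ‖w‖) ≤ Sξ * Sη := by
    have h := mul_le_mul hBξ hwη (norm_nonneg w) (mul_nonneg hsτ.le hSξnn)
    have key : τ⁻¹ * (sτ * Sξ * (sτ * Sη)) = Sξ * Sη := by
      have : sτ * Sξ * (sτ * Sη) = sτ ^ 2 * (Sξ * Sη) := by ring
      rw [this, hsτ2, ← mul_assoc, hτinv, one_mul]
    calc τ⁻¹ * (‖B‖ * ‖w‖) ≤ τ⁻¹ * (sτ * Sξ * (sτ * Sη)) :=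
          mul_le_mul_of_nonneg_left h hτi
      _ = Sξ * Sη := key
  have hP2 : ‖R e‖ * ‖w‖ ≤ Sξ * Sη := by
    have h := mul_le_mul hReξ hwη (norm_nonneg w) hSξnn
    have h' : sτ * (‖R e‖ * ‖w‖) ≤ sτ * (Sξ * Sη) := by nlinarith [h]
    exact le_of_mul_le_mul_left h' hsτ
  have hP3 : ‖e‖ * ‖v‖ ≤ Sξ * Sη :=
    mul_le_mul heξ hvη (norm_nonneg v) hSξnn
  have hP4 : ‖B‖ * ‖R v‖ ≤ Sξ * Sη := by
    have h := mul_le_mul hBξ hRvη (mul_nonneg hsτ.le (norm_nonneg _))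
      (mul_nonneg hsτ.le hSξnn)
    have h' : sτ * (‖B‖ * ‖R v‖) ≤ sτ * (Sξ * Sη) := by nlinarith [h]
    exact le_of_mul_le_mul_left h' hsτ
  have hP5 : ‖D B‖ * ‖D w‖ ≤ Sξ * Sη :=
    mul_le_mul hDBξ hDwη (norm_nonneg _) hSξnn
  -- inner product bounds
  have hθ0 : 0 ≤ θ := hθ.1
  have t1 : τ⁻¹ * ⟪B, w⟫ ≤ Sξ * Sη := by
    calc τ⁻¹ * ⟪B, w⟫ ≤ τ⁻¹ * (‖B‖ * ‖w‖) :=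
          mul_le_mul_of_nonneg_left (real_inner_le_norm B w) hτi
      _ ≤ Sξ * Sη := hP1
  have t2 : ⟪R e, w⟫ ≤ Sξ * Sη := (real_inner_le_norm _ _).trans hP2
  have t3 : ⟪e, v⟫ ≤ Sξ * Sη := (real_inner_le_norm _ _).trans hP3
  have t4 : θ * ⟪T B, v⟫ ≤ θ * (c * C_P) * (Sξ * Sη) := by
    have h1 : ⟪T B, v⟫ ≤ ‖T B‖ * ‖v‖ := real_inner_le_norm _ _
    have h2 : ‖T B‖ * ‖v‖ ≤ (c * ‖B‖) * (C_P * ‖R v‖) :=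
      mul_le_mul (hT B) (hPoincare v) (norm_nonneg v) (mul_nonneg hc (norm_nonneg B))
    have h3 : (c * ‖B‖) * (C_P * ‖R v‖) = (c * C_P) * (‖B‖ * ‖R v‖) := by ring
    have h4 : (c * C_P) * (‖B‖ * ‖R v‖) ≤ (c * C_P) * (Sξ * Sη) :=
      mul_le_mul_of_nonneg_left hP4 (mul_nonneg hc hCP)
    have h5 : ⟪T B, v⟫ ≤ (c * C_P) * (Sξ * Sη) := by
      calc ⟪T B, v⟫ ≤ ‖T B‖ * ‖v‖ := h1
        _ ≤ (c * ‖B‖) * (C_P * ‖R v‖) := h2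
        _ = (c * C_P) * (‖B‖ * ‖R v‖) := h3
        _ ≤ (c * C_P) * (Sξ * Sη) := h4
    calc θ * ⟪T B, v⟫ ≤ θ * ((c * C_P) * (Sξ * Sη)) :=
          mul_le_mul_of_nonneg_left h5 hθ0
      _ = θ * (c * C_P) * (Sξ * Sη) := by ring
  have t5 : -(θ * ⟪B, R v⟫) ≤ θ * (Sξ * Sη) := by
    have h1 : -⟪B, R v⟫ ≤ ‖B‖ * ‖R v‖ := by
      have := abs_real_inner_le_norm B (R v)
      have := neg_abs_le (⟪B, R v⟫ : ℝ)
      linarith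
    have : -⟪B, R v⟫ ≤ Sξ * Sη := h1.trans hP4
    calc -(θ * ⟪B, R v⟫) = θ * (-⟪B, R v⟫) := by ring
      _ ≤ θ * (Sξ * Sη) := mul_le_mul_of_nonneg_left this hθ0
  have t6 : ⟪D B, D w⟫ ≤ Sξ * Sη := (real_inner_le_norm _ _).trans hP5
  have hgoal : τ⁻¹ * ⟪B, w⟫ + ⟪R e, w⟫ + ⟪e, v⟫ + θ * ⟪T B, v⟫
      - θ * ⟪B, R v⟫ + ⟪D B, D w⟫
      ≤ (4 + θ * (1 + c * C_P)) * Sξ * Sη := by linarith [t1, t2, t3, t4, t5, t6]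
  exact hgoal
end

section
/- Let E, V, P be real inner product spaces, R : V →ₗ[ℝ] E and D : E →ₗ[ℝ] P linear maps with D ∘ R = 0, T : E →ₗ[ℝ] V a linear map with ‖T B‖_V ≤ c‖B‖_E for all B ∈ E (c ≥ 0). Fix θ with 0 < θ ≤ 1 and τ > 0 with c·√τ < 1. With a₀ and ‖·‖_{X,τ} as in Problem C, for every ξ ∈ X = E × V there exists η ∈ X with ‖η‖_{X,τ} ≤ √(1 + θ²/2)·‖ξ‖_{X,τ} and a₀(ξ,η) ≥ Ĉ ‖ξ‖_{X,τ} ‖η‖_{X,τ}, where Ĉ = (1 - c√τ)·(θ/2)·(1 + θ²/2)^{-1/2} > 0; consequently the bilinear form a₀ satisfies the inf-sup condition with constant Ĉ independent of the mesh. -/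
open RealInnerProductSpace

/-- The bilinear form a₀ of Problem C. -/
noncomputable def a0 {E V P : Type*}
    [NormedAddCommGroup E] [InnerProductSpace ℝ E]
    [NormedAddCommGroup V] [InnerProductSpace ℝ V]
    [NormedAddCommGroup P] [InnerProductSpace ℝ P]
    (R : V →ₗ[ℝ] E) (D : E →ₗ[ℝ] P) (T : E →ₗ[ℝ] V)
    (τ θ : ℝ) (ξ η : E × V) : ℝ :=
  τ⁻¹ * ⟪ξ.1, η.1⟫ + ⟪R ξ.2, η.1⟫ + ⟪ξ.2, η.2⟫ + θ * ⟪T ξ.1, η.2⟫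
    - θ * ⟪ξ.1, R η.2⟫ + ⟪D ξ.1, D η.1⟫

set_option maxHeartbeats 1000000 in
/-- Inf-sup condition for the bilinear form a₀ of Problem C, with constant
Ĉ = (1 - c√τ)(θ/2)(1 + θ²/2)^{-1/2} > 0, independent of the mesh. -/
theorem infsup_a0
    {E V P : Type*}
    [NormedAddCommGroup E] [InnerProductSpace ℝ E]
    [NormedAddCommGroup V] [InnerProductSpace ℝ V]
    [NormedAddCommGroup P] [InnerProductSpace ℝ P]
    (R : V →ₗ[ℝ] E) (D : E →ₗ[ℝ] P) (hDR : D ∘ₗ R = 0)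
    (T : E →ₗ[ℝ] V) (c : ℝ) (hc : 0 ≤ c)
    (hT : ∀ B : E, ‖T B‖ ≤ c * ‖B‖)
    (θ : ℝ) (hθ0 : 0 < θ) (hθ1 : θ ≤ 1)
    (τ : ℝ) (hτ : 0 < τ) (hsmall : c * Real.sqrt τ < 1) :
    0 < (1 - c * Real.sqrt τ) * (θ / 2) * (Real.sqrt (1 + θ ^ 2 / 2))⁻¹ ∧
    ∀ ξ : E × V, ∃ η : E × V,
      Real.sqrt (XnormSq R D τ η)
        ≤ Real.sqrt (1 + θ ^ 2 / 2) * Real.sqrt (XnormSq R D τ ξ) ∧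
      a0 R D T τ θ ξ η
        ≥ (1 - c * Real.sqrt τ) * (θ / 2) * (Real.sqrt (1 + θ ^ 2 / 2))⁻¹ *
            (Real.sqrt (XnormSq R D τ ξ) * Real.sqrt (XnormSq R D τ η)) := by
  have hst : 0 < Real.sqrt τ := Real.sqrt_pos.mpr hτ
  have hτ' : Real.sqrt τ * Real.sqrt τ = τ := Real.mul_self_sqrt hτ.le
  have hτi : 0 < τ⁻¹ := inv_pos.mpr hτ
  have hτit : τ⁻¹ * τ = 1 := inv_mul_cancel₀ hτ.ne'
  have hC0 : 0 < 1 - c * Real.sqrt τ := by linarith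
  have hQpos : (0:ℝ) < 1 + θ ^ 2 / 2 := by positivity
  have hsq : 0 < Real.sqrt (1 + θ ^ 2 / 2) := Real.sqrt_pos.mpr hQpos
  have hθ2 : (0:ℝ) < θ / 2 := by linarith
  constructor
  · exact mul_pos (mul_pos hC0 hθ2) (inv_pos.mpr hsq)
  intro ξ
  obtain ⟨B, e⟩ := ξ
  have hDRe : D (R e) = 0 := by
    have := LinearMap.ext_iff.mp hDR e
    simpa using this
  set s : ℝ := ⟪B, R e⟫ with hs
  have hXξ : XnormSq R D τ (B, e) =
      ‖e‖ ^ 2 + τ * ‖R e‖ ^ 2 + τ⁻¹ * ‖B‖ ^ 2 + ‖D B‖ ^ 2 := rfl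
  have hnw : ‖(θ/2) • (B + τ • R e)‖ ^ 2
      = (θ/2)^2 * (‖B‖^2 + 2 * (τ * s) + τ^2 * ‖R e‖^2) := by
    rw [norm_smul, mul_pow, norm_add_sq_real, real_inner_smul_right, norm_smul,
      Real.norm_eq_abs, Real.norm_eq_abs, abs_of_pos hτ, abs_of_pos hθ2]
    ring
  have hDw : D ((θ/2) • (B + τ • R e)) = (θ/2) • D B := by
    simp [map_smul, map_add, hDRe]
  have hnDw : ‖D ((θ/2) • (B + τ • R e))‖ ^ 2 = (θ/2)^2 * ‖D B‖^2 := by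
    rw [hDw, norm_smul, mul_pow, Real.norm_eq_abs, abs_of_pos hθ2]
  have hXη : XnormSq R D τ ((θ/2) • (B + τ • R e), e)
      = ‖e‖ ^ 2 + τ * ‖R e‖ ^ 2
        + τ⁻¹ * ((θ/2)^2 * (‖B‖^2 + 2 * (τ * s) + τ^2 * ‖R e‖^2))
        + (θ/2)^2 * ‖D B‖^2 := by
    rw [XnormSq, hnw, hnDw]
  have hsle : s ≤ ‖B‖ * ‖R e‖ := real_inner_le_norm B (R e)
  have hamgm : 2 * (‖B‖ * ‖R e‖) ≤ τ⁻¹ * ‖B‖^2 + τ * ‖R e‖^2 := by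
    have h := sq_nonneg (‖B‖ - τ * ‖R e‖)
    have key : τ⁻¹ * ‖B‖^2 + τ * ‖R e‖^2 - 2 * (‖B‖ * ‖R e‖)
        = τ⁻¹ * (‖B‖ - τ * ‖R e‖)^2 := by
      field_simp
      ring
    nlinarith [mul_nonneg hτi.le h]
  have hnonneg : (0:ℝ) ≤ ‖e‖^2 := sq_nonneg _
  have hb : (0:ℝ) ≤ τ⁻¹ * ‖B‖^2 := by positivity
  have hr : (0:ℝ) ≤ τ * ‖R e‖^2 := by positivity
  have hd : (0:ℝ) ≤ ‖D B‖^2 := sq_nonneg _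
  have hXξnn : 0 ≤ XnormSq R D τ (B, e) := by rw [hXξ]; positivity
  have hXle : Real.sqrt (XnormSq R D τ ((θ/2) • (B + τ • R e), e))
      ≤ Real.sqrt (1 + θ^2/2) * Real.sqrt (XnormSq R D τ (B, e)) := by
    have hXle' : XnormSq R D τ ((θ/2) • (B + τ • R e), e)
        ≤ (1 + θ^2/2) * XnormSq R D τ (B, e) := by
      rw [hXη, hXξ]
      have e1 : τ⁻¹ * ((θ/2)^2 * (‖B‖^2 + 2 * (τ * s) + τ^2 * ‖R e‖^2))
          = (θ^2/4) * (τ⁻¹ * ‖B‖^2 + 2*s + τ * ‖R e‖^2) := by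
        field_simp
        ring
      rw [e1]
      nlinarith [hsle, hamgm, sq_nonneg θ]
    rw [← Real.sqrt_mul hQpos.le]
    exact Real.sqrt_le_sqrt hXle'
  refine ⟨((θ/2) • (B + τ • R e), e), hXle, ?_⟩
  have ha0 : a0 R D T τ θ (B, e) ((θ/2) • (B + τ • R e), e)
      = (θ/2) * (τ⁻¹ * ‖B‖^2 + τ * ‖R e‖^2 + ‖D B‖^2) + ‖e‖^2 + θ * ⟪T B, e⟫ := by
    rw [a0]
    simp only [hDw, inner_smul_right, real_inner_smul_right, inner_add_right,
      real_inner_self_eq_norm_sq]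
    rw [real_inner_comm B (R e)]
    field_simp
    ring
  have hTle : -(c * ‖B‖ * ‖e‖) ≤ ⟪T B, e⟫ := by
    have h1 : -(‖T B‖ * ‖e‖) ≤ ⟪T B, e⟫ := neg_le_of_abs_le (abs_real_inner_le_norm _ _)
    have h2 : ‖T B‖ * ‖e‖ ≤ c * ‖B‖ * ‖e‖ :=
      mul_le_mul_of_nonneg_right (hT B) (norm_nonneg _)
    linarith
  have hBe : 2 * (‖B‖ * ‖e‖) ≤ Real.sqrt τ * (τ⁻¹ * ‖B‖^2 + ‖e‖^2) := by
    have h := sq_nonneg (‖B‖ - Real.sqrt τ * ‖e‖)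
    have hscaled : Real.sqrt τ * (2 * (‖B‖ * ‖e‖))
        ≤ Real.sqrt τ * (Real.sqrt τ * (τ⁻¹ * ‖B‖^2 + ‖e‖^2)) := by
      have expand : Real.sqrt τ * (Real.sqrt τ * (τ⁻¹ * ‖B‖^2 + ‖e‖^2))
          = ‖B‖^2 + τ * ‖e‖^2 := by
        rw [← mul_assoc, hτ']
        field_simp
      rw [expand]
      nlinarith [h, hτ']
    exact le_of_mul_le_mul_left hscaled hst
  have hmain : a0 R D T τ θ (B, e) ((θ/2) • (B + τ • R e), e)
      ≥ (1 - c * Real.sqrt τ) * (θ/2) * XnormSq R D τ (B, e) := by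
    rw [ha0, hXξ]
    have hθT : -(θ * (c * ‖B‖ * ‖e‖)) ≤ θ * ⟪T B, e⟫ := by
      have := mul_le_mul_of_nonneg_left hTle hθ0.le
      linarith
    have hc2 : θ * (c * ‖B‖ * ‖e‖) ≤ θ * (c * Real.sqrt τ / 2 * (τ⁻¹ * ‖B‖^2 + ‖e‖^2)) := by
      apply mul_le_mul_of_nonneg_left _ hθ0.le
      have := mul_le_mul_of_nonneg_left hBe hc
      linarith
    have h3 : -(θ * (c * Real.sqrt τ / 2 * (τ⁻¹ * ‖B‖^2 + ‖e‖^2))) ≤ θ * ⟪T B, e⟫ := by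
      linarith
    have hrd1 : (0:ℝ) ≤ θ * (c * Real.sqrt τ * (τ * ‖R e‖^2)) :=
      mul_nonneg hθ0.le (mul_nonneg (mul_nonneg hc hst.le) hr)
    have hrd2 : (0:ℝ) ≤ θ * (c * Real.sqrt τ * ‖D B‖^2) :=
      mul_nonneg hθ0.le (mul_nonneg (mul_nonneg hc hst.le) hd)
    have hE : (0:ℝ) ≤ (1 - θ/2) * ‖e‖^2 :=
      mul_nonneg (by linarith) hnonneg
    linarith [h3, hrd1, hrd2, hE]
  have hCpos : 0 ≤ (1 - c * Real.sqrt τ) * (θ/2) * (Real.sqrt (1 + θ ^ 2 / 2))⁻¹ := by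
    positivity
  have h1 : Real.sqrt (XnormSq R D τ (B, e)) *
        Real.sqrt (XnormSq R D τ ((θ/2) • (B + τ • R e), e))
      ≤ Real.sqrt (1 + θ^2/2) * XnormSq R D τ (B, e) := by
    have := mul_le_mul_of_nonneg_left hXle (Real.sqrt_nonneg (XnormSq R D τ (B, e)))
    calc Real.sqrt (XnormSq R D τ (B, e)) *
          Real.sqrt (XnormSq R D τ ((θ/2) • (B + τ • R e), e))
        ≤ Real.sqrt (XnormSq R D τ (B, e)) *
          (Real.sqrt (1 + θ^2/2) * Real.sqrt (XnormSq R D τ (B, e))) := this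
      _ = Real.sqrt (1 + θ^2/2) * XnormSq R D τ (B, e) := by
          linear_combination Real.sqrt (1 + θ^2/2) * Real.mul_self_sqrt hXξnn
  calc (1 - c * Real.sqrt τ) * (θ / 2) * (Real.sqrt (1 + θ ^ 2 / 2))⁻¹ *
        (Real.sqrt (XnormSq R D τ (B, e)) *
          Real.sqrt (XnormSq R D τ ((θ/2) • (B + τ • R e), e)))
      ≤ (1 - c * Real.sqrt τ) * (θ / 2) * (Real.sqrt (1 + θ ^ 2 / 2))⁻¹ *
        (Real.sqrt (1 + θ^2/2) * XnormSq R D τ (B, e)) :=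
        mul_le_mul_of_nonneg_left h1 hCpos
    _ = (1 - c * Real.sqrt τ) * (θ/2) * XnormSq R D τ (B, e) := by
        rw [mul_assoc ((1 - c * Real.sqrt τ) * (θ / 2)),
          ← mul_assoc (Real.sqrt (1 + θ ^ 2 / 2))⁻¹, inv_mul_cancel₀ hsq.ne', one_mul]
    _ ≤ a0 R D T τ θ (B, e) ((θ/2) • (B + τ • R e), e) := hmain
end

section
/- Let E, V, P be real inner product spaces, R : V →ₗ[ℝ] E and D : E →ₗ[ℝ] P linear maps with D ∘ R = 0, T : E →ₗ[ℝ] V a linear map with ‖T B‖_V ≤ c‖B‖_E for all B ∈ E (c ≥ 0). Fix θ with 0 < θ ≤ 1 and τ > 0. For ξ = (B,e) ∈ E × V set η_ξ = ((θ/2)•(B + τ • R e), e). Then with a₀ and ‖·‖_{X,τ} as in Problem C, a₀(ξ, η_ξ) ≥ (θ/2)·(1 - c√τ)·‖ξ‖_{X,τ}². -/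
/-!
Testing with η_ξ makes the cross terms ⟪B, R e⟫ cancel and, since D ∘ R = 0, the divergence
term reduces to (θ/2)‖D B‖². What remains is (θ/2)(τ⁻¹‖B‖² + τ‖R e‖² + ‖D B‖²) + ‖e‖² plus the
transport term θ⟪T B, e⟫, which Cauchy–Schwarz and a weighted Young inequality bound below by
-(θ/2) c √τ (τ⁻¹‖B‖² + ‖e‖²). The surplus (1 - θ/2)‖e‖² is nonnegative because θ ≤ 1.
-/

open RealInnerProductSpace

theorem two_mul_le_sqrt_mul_inv_mul_sq_add_sq {τ : ℝ} (hτ : 0 < τ) (x y : ℝ) :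
    2 * x * y ≤ √τ * (τ⁻¹ * x ^ 2 + y ^ 2) := by
  have hgap : √τ * (τ⁻¹ * x ^ 2 + y ^ 2) - 2 * x * y = (x - √τ * y) ^ 2 / √τ := by
    field_simp
    linear_combination x ^ 2 * Real.mul_self_sqrt hτ.le
  have : 0 ≤ (x - √τ * y) ^ 2 / √τ := by positivity
  linarith

section

variable {E V P : Type*}
  [NormedAddCommGroup E] [InnerProductSpace ℝ E]
  [NormedAddCommGroup V] [InnerProductSpace ℝ V]
  [NormedAddCommGroup P] [InnerProductSpace ℝ P]

theorem neg_mul_le_inner_of_norm_le {T : E →ₗ[ℝ] V} {c : ℝ} (hc : 0 ≤ c)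
    (hT : ∀ B : E, ‖T B‖ ≤ c * ‖B‖) {τ : ℝ} (hτ : 0 < τ) (B : E) (e : V) :
    -(c * √τ / 2 * (τ⁻¹ * ‖B‖ ^ 2 + ‖e‖ ^ 2)) ≤ ⟪T B, e⟫ := by
  have hcs : -(c * ‖B‖ * ‖e‖) ≤ ⟪T B, e⟫ :=
    calc -(c * ‖B‖ * ‖e‖) ≤ -(‖T B‖ * ‖e‖) := by gcongr; exact hT B
      _ ≤ ⟪T B, e⟫ := neg_le_of_abs_le (abs_real_inner_le_norm _ _)
  have hyoung := mul_le_mul_of_nonneg_left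
    (two_mul_le_sqrt_mul_inv_mul_sq_add_sq hτ ‖B‖ ‖e‖) hc
  linarith

theorem a0_test_pair_eq (R : V →ₗ[ℝ] E) (D : E →ₗ[ℝ] P) (T : E →ₗ[ℝ] V)
    (θ : ℝ) {τ : ℝ} (hτ : τ ≠ 0) (B : E) (e : V) (hDRe : D (R e) = 0) :
    τ⁻¹ * ⟪B, (θ / 2) • (B + τ • R e)⟫ + ⟪R e, (θ / 2) • (B + τ • R e)⟫
      + ⟪e, e⟫ + θ * ⟪T B, e⟫ - θ * ⟪B, R e⟫
      + ⟪D B, D ((θ / 2) • (B + τ • R e))⟫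
    = θ / 2 * (τ⁻¹ * ‖B‖ ^ 2 + τ * ‖R e‖ ^ 2 + ‖D B‖ ^ 2) + ‖e‖ ^ 2 + θ * ⟪T B, e⟫ := by
  simp only [map_smul, map_add, hDRe, smul_zero, add_zero, real_inner_smul_right,
    inner_add_right, real_inner_self_eq_norm_sq, real_inner_comm B (R e)]
  field_simp
  ring

end

/-- Coercivity of the bilinear form a₀ of Problem C on the pair
η_ξ = ((θ/2)•(B + τ•R e), e): a₀(ξ, η_ξ) ≥ (θ/2)(1 - c√τ)‖ξ‖²_{X,τ}. -/
theorem a0_coercive_on_test_pair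
    {E V P : Type*}
    [NormedAddCommGroup E] [InnerProductSpace ℝ E]
    [NormedAddCommGroup V] [InnerProductSpace ℝ V]
    [NormedAddCommGroup P] [InnerProductSpace ℝ P]
    (R : V →ₗ[ℝ] E) (D : E →ₗ[ℝ] P) (hDR : D ∘ₗ R = 0)
    (T : E →ₗ[ℝ] V) (c : ℝ) (hc : 0 ≤ c)
    (hT : ∀ B : E, ‖T B‖ ≤ c * ‖B‖)
    (θ : ℝ) (hθ0 : 0 < θ) (hθ1 : θ ≤ 1)
    (τ : ℝ) (hτ : 0 < τ)
    (B : E) (e : V) :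
    -- a₀(ξ, η_ξ) with ξ = (B, e) and η_ξ = ((θ/2)•(B + τ•R e), e)
    τ⁻¹ * ⟪B, (θ / 2) • (B + τ • R e)⟫ + ⟪R e, (θ / 2) • (B + τ • R e)⟫
      + ⟪e, e⟫ + θ * ⟪T B, e⟫ - θ * ⟪B, R e⟫
      + ⟪D B, D ((θ / 2) • (B + τ • R e))⟫
    ≥ (θ / 2) * (1 - c * Real.sqrt τ) *
        (‖e‖ ^ 2 + τ * ‖R e‖ ^ 2 + τ⁻¹ * ‖B‖ ^ 2 + ‖D B‖ ^ 2) := by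
  have hDRe : D (R e) = 0 := by simpa using LinearMap.congr_fun hDR e
  rw [a0_test_pair_eq R D T θ hτ.ne' B e hDRe, ge_iff_le]
  have htransport := mul_le_mul_of_nonneg_left
    (neg_mul_le_inner_of_norm_le hc hT hτ B e) hθ0.le
  have hslack : 0 ≤ θ * (c * √τ) * (τ * ‖R e‖ ^ 2 + ‖D B‖ ^ 2) := by positivity
  have he : 0 ≤ (1 - θ / 2) * ‖e‖ ^ 2 := mul_nonneg (by linarith) (sq_nonneg _)
  linarith
end

section
/- Let E, V, P be real inner product spaces, R : V →ₗ[ℝ] E and D : E →ₗ[ℝ] P linear maps with D ∘ R = 0, θ ∈ ℝ and τ > 0. For ξ = (B,e) ∈ E × V set η_ξ = ((θ/2)•(B + τ • R e), e). Then ‖η_ξ‖_{X,τ}² ≤ (1 + θ²/2)·‖ξ‖_{X,τ}², where ‖(B,e)‖_{X,τ}² = ‖e‖_V² + τ‖R e‖_E² + τ⁻¹‖B‖_E² + ‖D B‖_P². -/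
open RealInnerProductSpace

/-- Bound on the X-norm of the test pair η_ξ = ((θ/2)•(B + τ•R e), e):
‖η_ξ‖²_{X,τ} ≤ (1 + θ²/2)‖ξ‖²_{X,τ}. -/
theorem test_pair_norm_bound
    {E V P : Type*}
    [NormedAddCommGroup E] [InnerProductSpace ℝ E]
    [NormedAddCommGroup V] [InnerProductSpace ℝ V]
    [NormedAddCommGroup P] [InnerProductSpace ℝ P]
    (R : V →ₗ[ℝ] E) (D : E →ₗ[ℝ] P) (hDR : D ∘ₗ R = 0)
    (θ : ℝ) (τ : ℝ) (hτ : 0 < τ)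
    (B : E) (e : V) :
    ‖e‖ ^ 2 + τ * ‖R e‖ ^ 2
      + τ⁻¹ * ‖(θ / 2) • (B + τ • R e)‖ ^ 2
      + ‖D ((θ / 2) • (B + τ • R e))‖ ^ 2
    ≤ (1 + θ ^ 2 / 2) *
        (‖e‖ ^ 2 + τ * ‖R e‖ ^ 2 + τ⁻¹ * ‖B‖ ^ 2 + ‖D B‖ ^ 2) := by
  have hDRe : D (R e) = 0 := by
    have := congrArg (fun f => f e) hDR
    simpa using this
  have hD : D ((θ / 2) • (B + τ • R e)) = (θ / 2) • D B := by
    simp [map_smul, map_add, hDRe]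
  rw [hD]
  have h1 : ‖B + τ • R e‖ ≤ ‖B‖ + τ * ‖R e‖ := by
    calc ‖B + τ • R e‖ ≤ ‖B‖ + ‖τ • R e‖ := norm_add_le _ _
    _ = ‖B‖ + τ * ‖R e‖ := by rw [norm_smul, Real.norm_of_nonneg hτ.le]
  rw [norm_smul, norm_smul]
  have hx : ‖B + τ • R e‖ ≥ 0 := norm_nonneg _
  have hB : ‖B‖ ≥ 0 := norm_nonneg _
  have hRe : ‖R e‖ ≥ 0 := norm_nonneg _
  have hDB : ‖D B‖ ≥ 0 := norm_nonneg _
  have he : ‖e‖ ≥ 0 := norm_nonneg _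
  have habs : ‖(θ / 2 : ℝ)‖ ^ 2 = θ ^ 2 / 4 := by
    rw [Real.norm_eq_abs, sq_abs]; ring
  rw [mul_pow, mul_pow, habs]
  have key : ‖B + τ • R e‖ ^ 2 ≤ 2 * (‖B‖ ^ 2 + τ ^ 2 * ‖R e‖ ^ 2) := by
    nlinarith [sq_nonneg (‖B‖ - τ * ‖R e‖)]
  have hτi : (0:ℝ) < τ⁻¹ := inv_pos.mpr hτ
  have h2 : τ⁻¹ * (θ ^ 2 / 4 * ‖B + τ • R e‖ ^ 2)
      ≤ θ ^ 2 / 2 * (τ⁻¹ * ‖B‖ ^ 2) + θ ^ 2 / 2 * (τ * ‖R e‖ ^ 2) := by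
    have h3 := mul_le_mul_of_nonneg_left key
      (mul_nonneg (by positivity : (0:ℝ) ≤ θ ^ 2 / 4) hτi.le)
    have h4 : θ ^ 2 / 4 * τ⁻¹ * (2 * (‖B‖ ^ 2 + τ ^ 2 * ‖R e‖ ^ 2))
        = θ ^ 2 / 2 * (τ⁻¹ * ‖B‖ ^ 2) + θ ^ 2 / 2 * (τ * ‖R e‖ ^ 2) := by
      field_simp
      ring
    linarith [h3, h4.le, h4.ge]
  nlinarith [h2, mul_nonneg hτi.le (sq_nonneg ‖B‖), mul_nonneg (sq_nonneg θ) (sq_nonneg ‖e‖), mul_nonneg (sq_nonneg θ) (sq_nonneg ‖D B‖), sq_nonneg ‖D B‖]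
end

section
/- Let E, V, P be finite-dimensional real inner product spaces, R : V →ₗ[ℝ] E and D : E →ₗ[ℝ] P linear maps with D ∘ R = 0, T : E →ₗ[ℝ] V a linear map, and constants c ≥ 0, C_P ≥ 0 with ‖T B‖_V ≤ c‖B‖_E for all B ∈ E and ‖v‖_V ≤ C_P‖R v‖_E for all v ∈ V. Fix θ with 0 < θ ≤ 1 and τ > 0 with c√τ < 1. Then for every F ∈ E with D F = 0 and every linear functional g : V →ₗ[ℝ] ℝ there exists a unique pair (B,e) ∈ E × V such that: for all w ∈ E, τ⁻¹⟪B,w⟫_E + ⟪R e,w⟫_E = ⟪F,w⟫_E, and for all v ∈ V, ⟪e,v⟫_V + θ⟪T B,v⟫_V - θ⟪B,R v⟫_E = g(v). Moreover D B = 0 and ‖(B,e)‖_{X,τ} ≤ Ĉ⁻¹·(√τ·‖F‖_E + G), where G is the operator norm of g with respect to ‖·‖_V, Ĉ = (1 - c√τ)(θ/2)(1 + θ²/2)^{-1/2}, and ‖(B,e)‖_{X,τ}² = ‖e‖_V² + τ‖R e‖_E² + τ⁻¹‖B‖_E² + ‖D B‖_P². In particular the solution map (F,g) ↦ (B,e)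 is continuous uniformly in τ (and in the mesh). -/
open RealInnerProductSpace

/-!
Eliminating `B = τ (F - R e)` through the first equation leaves a square linear system for `e`
alone on the finite-dimensional space `V` (a Schur complement), so existence follows from
uniqueness, and both follow from the a priori estimate. Testing the second equation with `e` and
expanding `τ ‖F‖² = τ ‖τ⁻¹ B + R e‖²` gives the energy identity
`θ (τ⁻¹‖B‖² + τ‖R e‖²) + 2‖e‖² + 2θ ⟪T B, e⟫ - 2 g e = θ τ ‖F‖²`; Young's inequality
`c ‖B‖ ‖e‖ ≤ c √τ (τ⁻¹‖B‖² + ‖e‖²) / 2` absorbs the coupling term as long as `c √τ < 1`, and the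
resulting quadratic inequality for the energy norm is solved explicitly. `D B = 0` is inherited
from `D F = 0` because `B ∈ τ (F - range R)` and `D ∘ R = 0`.
-/

namespace ThetaScheme

theorem mul_le_sqrt_mul_add_sq {τ : ℝ} (hτ : 0 < τ) (b z : ℝ) :
    b * z ≤ √τ * (τ⁻¹ * b ^ 2 + z ^ 2) / 2 := by
  have hs : 0 < √τ := Real.sqrt_pos.mpr hτ
  have hsq : τ⁻¹ * b ^ 2 = (b / √τ) ^ 2 := by rw [div_pow, Real.sq_sqrt hτ.le]; ring
  have hbz : b * z = √τ * (b / √τ * z) := by field_simp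
  rw [hsq, hbz]
  nlinarith [two_mul_le_add_sq (b / √τ) z]

theorem le_of_sq_le_sq_add_mul {x θ a G : ℝ} (hx : 0 ≤ x) (ha : 0 ≤ a) (hG : 0 ≤ G)
    (h : x ^ 2 ≤ θ ^ 2 * a ^ 2 + 2 * G * x) : x ≤ 2 * √(1 + θ ^ 2 / 2) * (a + G) := by
  rw [← pow_le_pow_iff_left₀ hx (by positivity) two_ne_zero, mul_pow, mul_pow,
    Real.sq_sqrt (by positivity)]
  nlinarith [sq_nonneg (x - 2 * G), mul_nonneg (sq_nonneg θ) (mul_nonneg ha hG),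
    mul_nonneg (sq_nonneg θ) (sq_nonneg G), mul_nonneg ha hG, sq_nonneg a]

theorem le_of_mul_sq_le_sq_add_mul {α θ N a G : ℝ} (hα0 : 0 < α) (hα1 : α ≤ 1) (hθ : 0 < θ)
    (hN : 0 ≤ N) (ha : 0 ≤ a) (hG : 0 ≤ G) (h : α * θ * N ^ 2 ≤ θ * a ^ 2 + 2 * G * N) :
    N ≤ (α * (θ / 2) * (√(1 + θ ^ 2 / 2))⁻¹)⁻¹ * (a + G) := by
  have hx := le_of_sq_le_sq_add_mul (x := α * θ * N) (by positivity) ha hG (by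
    have := mul_le_mul_of_nonneg_left h (mul_nonneg hα0.le hθ.le)
    nlinarith [mul_nonneg (sub_nonneg.mpr hα1) (mul_nonneg (sq_nonneg θ) (sq_nonneg a))])
  have hu : 0 < √(1 + θ ^ 2 / 2) := Real.sqrt_pos.mpr (by positivity)
  rw [inv_mul_eq_div, le_div_iff₀ (by positivity)]
  calc N * (α * (θ / 2) * (√(1 + θ ^ 2 / 2))⁻¹)
      = α * θ * N / (2 * √(1 + θ ^ 2 / 2)) := by field_simp
    _ ≤ a + G := by rwa [div_le_iff₀' (by positivity)]

variable {E V : Type*} [NormedAddCommGroup E] [InnerProductSpace ℝ E]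
  [NormedAddCommGroup V] [InnerProductSpace ℝ V]

theorem norm_sq_inv_smul_add {τ : ℝ} (hτ : τ ≠ 0) (x y : E) :
    τ * ‖τ⁻¹ • x + y‖ ^ 2 = τ⁻¹ * ‖x‖ ^ 2 + 2 * ⟪x, y⟫ + τ * ‖y‖ ^ 2 := by
  rw [norm_add_sq_real, norm_smul, real_inner_smul_left, mul_pow, Real.norm_eq_abs, sq_abs]
  field_simp

variable (R : V →ₗ[ℝ] E) (T : E →ₗ[ℝ] V) (θ τ : ℝ)

def IsSolution (F : E) (g : V →ₗ[ℝ] ℝ) (B : E) (e : V) : Prop :=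
  (∀ w : E, τ⁻¹ * ⟪B, w⟫ + ⟪R e, w⟫ = ⟪F, w⟫) ∧
    (∀ v : V, ⟪e, v⟫ + θ * ⟪T B, v⟫ - θ * ⟪B, R v⟫ = g v)

variable {R T θ τ} {F F' : E} {g g' : V →ₗ[ℝ] ℝ} {B B' : E} {e e' : V}

namespace IsSolution

theorem inv_smul_add (h : IsSolution R T θ τ F g B e) : τ⁻¹ • B + R e = F :=
  ext_inner_right ℝ fun w => by rw [inner_add_left, real_inner_smul_left, h.1 w]

theorem eq_smul_sub (hτ : τ ≠ 0) (h : IsSolution R T θ τ F g B e) : B = τ • (F - R e) := by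
  rw [← h.inv_smul_add, add_sub_cancel_right, smul_inv_smul₀ hτ]

theorem sub (h : IsSolution R T θ τ F g B e) (h' : IsSolution R T θ τ F' g' B' e') :
    IsSolution R T θ τ (F - F') (g - g') (B - B') (e - e') := by
  constructor
  · intro w
    simp only [map_sub, inner_sub_left]
    linear_combination h.1 w - h'.1 w
  · intro v
    simp only [map_sub, inner_sub_left, LinearMap.sub_apply]
    linear_combination h.2 v - h'.2 v

theorem map_eq_zero {P : Type*} [AddCommGroup P] [Module ℝ P] {D : E →ₗ[ℝ] P} (hDR : D ∘ₗ R = 0)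
    (hF : D F = 0) (hτ : τ ≠ 0) (h : IsSolution R T θ τ F g B e) : D B = 0 := by
  rw [h.eq_smul_sub hτ, map_smul, map_sub, hF, ← LinearMap.comp_apply, hDR]
  simp

theorem energy_identity (hτ : τ ≠ 0) (h : IsSolution R T θ τ F g B e) :
    θ * (τ⁻¹ * ‖B‖ ^ 2 + τ * ‖R e‖ ^ 2) + 2 * ‖e‖ ^ 2 + 2 * θ * ⟪T B, e⟫ - 2 * g e
      = θ * (τ * ‖F‖ ^ 2) := by
  have hF := norm_sq_inv_smul_add hτ B (R e)
  rw [h.inv_smul_add] at hF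
  have he := h.2 e
  rw [real_inner_self_eq_norm_sq] at he
  linear_combination 2 * he - θ * hF

theorem sqrt_energy_le [FiniteDimensional ℝ V] {c : ℝ} (hc : 0 ≤ c)
    (hT : ∀ B : E, ‖T B‖ ≤ c * ‖B‖) (hθ0 : 0 < θ) (hθ1 : θ ≤ 1) (hτ : 0 < τ)
    (hsmall : c * √τ < 1) (h : IsSolution R T θ τ F g B e) :
    √(‖e‖ ^ 2 + τ * ‖R e‖ ^ 2 + τ⁻¹ * ‖B‖ ^ 2)
      ≤ ((1 - c * √τ) * (θ / 2) * (√(1 + θ ^ 2 / 2))⁻¹)⁻¹ *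
          (√τ * ‖F‖ + ‖LinearMap.toContinuousLinearMap g‖) := by
  set N := √(‖e‖ ^ 2 + τ * ‖R e‖ ^ 2 + τ⁻¹ * ‖B‖ ^ 2)
  set G := ‖LinearMap.toContinuousLinearMap g‖
  have hN : N ^ 2 = ‖e‖ ^ 2 + τ * ‖R e‖ ^ 2 + τ⁻¹ * ‖B‖ ^ 2 := Real.sq_sqrt (by positivity)
  have he : ‖e‖ ≤ N := Real.le_sqrt_of_sq_le <| by
    have : 0 ≤ τ * ‖R e‖ ^ 2 + τ⁻¹ * ‖B‖ ^ 2 := by positivity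
    linarith
  have hge : g e ≤ G * N := calc
    g e ≤ G * ‖e‖ := by
      simpa using (le_abs_self _).trans ((LinearMap.toContinuousLinearMap g).le_opNorm e)
    _ ≤ G * N := by gcongr
  have hcoupling : -⟪T B, e⟫ ≤ c * √τ * (τ⁻¹ * ‖B‖ ^ 2 + ‖e‖ ^ 2) / 2 := calc
    -⟪T B, e⟫ ≤ ‖T B‖ * ‖e‖ := (neg_le_abs _).trans (abs_real_inner_le_norm _ _)
    _ ≤ c * (‖B‖ * ‖e‖) := by rw [← mul_assoc]; gcongr; exact hT B
    _ ≤ c * (√τ * (τ⁻¹ * ‖B‖ ^ 2 + ‖e‖ ^ 2) / 2) := by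
      gcongr; exact mul_le_sqrt_mul_add_sq hτ _ _
    _ = _ := by ring
  have hsF : (√τ * ‖F‖) ^ 2 = τ * ‖F‖ ^ 2 := by rw [mul_pow, Real.sq_sqrt hτ.le]
  refine le_of_mul_sq_le_sq_add_mul (by linarith) (by nlinarith [Real.sqrt_nonneg τ]) hθ0
    (Real.sqrt_nonneg _) (by positivity) (norm_nonneg _) ?_
  rw [hN, hsF]
  nlinarith [h.energy_identity hτ.ne', mul_le_mul_of_nonneg_left hcoupling hθ0.le,
    mul_nonneg (mul_nonneg hθ0.le (mul_nonneg hc (Real.sqrt_nonneg τ)))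
      (mul_nonneg hτ.le (sq_nonneg ‖R e‖)), mul_nonneg (by linarith : 0 ≤ 2 - θ) (sq_nonneg ‖e‖)]

theorem eq_zero [FiniteDimensional ℝ V] {c : ℝ} (hc : 0 ≤ c)
    (hT : ∀ B : E, ‖T B‖ ≤ c * ‖B‖) (hθ0 : 0 < θ) (hθ1 : θ ≤ 1) (hτ : 0 < τ)
    (hsmall : c * √τ < 1) (h : IsSolution R T θ τ 0 0 B e) : B = 0 ∧ e = 0 := by
  have hle := h.sqrt_energy_le hc hT hθ0 hθ1 hτ hsmall
  rw [norm_zero, mul_zero, map_zero, norm_zero, add_zero, mul_zero,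
    Real.sqrt_le_left (le_refl 0), zero_pow two_ne_zero] at hle
  have hY : 0 ≤ τ * ‖R e‖ ^ 2 := by positivity
  have hX : 0 ≤ τ⁻¹ * ‖B‖ ^ 2 := by positivity
  have hB : τ⁻¹ * ‖B‖ ^ 2 = 0 := by linarith [sq_nonneg ‖e‖]
  have he : ‖e‖ ^ 2 = 0 := by linarith [sq_nonneg ‖e‖]
  exact ⟨by simpa [hτ.ne'] using hB, by simpa using he⟩

end IsSolution

variable (R T θ τ)

/-- The second equation tested against `v` after substituting `B = τ (F - R e)`: its part linear
in `e` is `schurForm`, the rest moves to `schurRhs`. -/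
noncomputable def schurForm : V →ₗ[ℝ] Module.Dual ℝ V :=
  innerₗ V + (θ * τ) • (innerₗ E).compl₁₂ R R - (θ * τ) • innerₗ V ∘ₗ T ∘ₗ R

noncomputable def schurRhs (F : E) (g : V →ₗ[ℝ] ℝ) : Module.Dual ℝ V :=
  g - (θ * τ) • innerₗ V (T F) + (θ * τ) • innerₗ E F ∘ₗ R

variable {R T θ τ}

theorem isSolution_of_schurForm_eq (hτ : τ ≠ 0)
    (h : schurForm R T θ τ e = schurRhs R T θ τ F g) :
    IsSolution R T θ τ F g (τ • (F - R e)) e := by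
  constructor
  · intro w
    rw [real_inner_smul_left, inner_sub_left]
    field_simp
    ring
  · intro v
    have hv := LinearMap.congr_fun h v
    simp only [schurForm, schurRhs, LinearMap.sub_apply, LinearMap.add_apply,
      LinearMap.smul_apply, LinearMap.comp_apply, LinearMap.compl₁₂_apply, innerₗ_apply_apply,
      smul_eq_mul] at hv
    simp only [map_smul, map_sub, real_inner_smul_left, inner_sub_left]
    linear_combination hv

theorem schurRhs_zero : schurRhs R T θ τ 0 0 = 0 := by
  simp [schurRhs]

theorem schurForm_surjective [FiniteDimensional ℝ V] {c : ℝ} (hc : 0 ≤ c)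
    (hT : ∀ B : E, ‖T B‖ ≤ c * ‖B‖) (hθ0 : 0 < θ) (hθ1 : θ ≤ 1) (hτ : 0 < τ)
    (hsmall : c * √τ < 1) : Function.Surjective (schurForm R T θ τ) := by
  refine (LinearMap.injective_iff_surjective_of_finrank_eq_finrank
    Subspace.dual_finrank_eq.symm).mp ((injective_iff_map_eq_zero _).mpr fun e he => ?_)
  have h := isSolution_of_schurForm_eq (F := 0) (g := 0) hτ.ne' (he.trans schurRhs_zero.symm)
  exact (h.eq_zero hc hT hθ0 hθ1 hτ hsmall).2

theorem existsUnique_isSolution [FiniteDimensional ℝ V] {c : ℝ} (hc : 0 ≤ c)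
    (hT : ∀ B : E, ‖T B‖ ≤ c * ‖B‖) (hθ0 : 0 < θ) (hθ1 : θ ≤ 1) (hτ : 0 < τ)
    (hsmall : c * √τ < 1) (F : E) (g : V →ₗ[ℝ] ℝ) :
    ∃! ξ : E × V, IsSolution R T θ τ F g ξ.1 ξ.2 := by
  obtain ⟨e, he⟩ := schurForm_surjective hc hT hθ0 hθ1 hτ hsmall (schurRhs R T θ τ F g)
  refine ⟨(τ • (F - R e), e), isSolution_of_schurForm_eq hτ.ne' he, fun ξ hξ => ?_⟩
  have hdiff := hξ.sub (isSolution_of_schurForm_eq hτ.ne' he)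
  rw [sub_self, sub_self] at hdiff
  obtain ⟨hB, he⟩ := hdiff.eq_zero hc hT hθ0 hθ1 hτ hsmall
  exact Prod.ext (sub_eq_zero.mp hB) (sub_eq_zero.mp he)

end ThetaScheme

theorem wellposedness_problem_A_general
    {E V P : Type*}
    [NormedAddCommGroup E] [InnerProductSpace ℝ E]
    [NormedAddCommGroup V] [InnerProductSpace ℝ V] [FiniteDimensional ℝ V]
    [NormedAddCommGroup P] [InnerProductSpace ℝ P]
    (R : V →ₗ[ℝ] E) (D : E →ₗ[ℝ] P) (hDR : D ∘ₗ R = 0)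
    (T : E →ₗ[ℝ] V) (c : ℝ) (hc : 0 ≤ c)
    (hT : ∀ B : E, ‖T B‖ ≤ c * ‖B‖)
    (θ : ℝ) (hθ0 : 0 < θ) (hθ1 : θ ≤ 1)
    (τ : ℝ) (hτ : 0 < τ) (hsmall : c * Real.sqrt τ < 1) :
    ∀ F : E, D F = 0 → ∀ g : V →ₗ[ℝ] ℝ,
      (∃! ξ : E × V,
        (∀ w : E, τ⁻¹ * ⟪ξ.1, w⟫ + ⟪R ξ.2, w⟫ = ⟪F, w⟫) ∧
        (∀ v : V, ⟪ξ.2, v⟫ + θ * ⟪T ξ.1, v⟫ - θ * ⟪ξ.1, R v⟫ = g v)) ∧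
      (∀ (B : E) (e : V),
        ((∀ w : E, τ⁻¹ * ⟪B, w⟫ + ⟪R e, w⟫ = ⟪F, w⟫) ∧
         (∀ v : V, ⟪e, v⟫ + θ * ⟪T B, v⟫ - θ * ⟪B, R v⟫ = g v)) →
        D B = 0 ∧
        Real.sqrt (‖e‖ ^ 2 + τ * ‖R e‖ ^ 2 + τ⁻¹ * ‖B‖ ^ 2 + ‖D B‖ ^ 2)
          ≤ ((1 - c * Real.sqrt τ) * (θ / 2) * (Real.sqrt (1 + θ ^ 2 / 2))⁻¹)⁻¹ *
              (Real.sqrt τ * ‖F‖ + ‖LinearMap.toContinuousLinearMap g‖)) := by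
  intro F hF g
  refine ⟨ThetaScheme.existsUnique_isSolution hc hT hθ0 hθ1 hτ hsmall F g,
    fun B e (hsol : ThetaScheme.IsSolution R T θ τ F g B e) => ?_⟩
  have hDB : D B = 0 := hsol.map_eq_zero hDR hF hτ.ne'
  refine ⟨hDB, ?_⟩
  rw [hDB, norm_zero, zero_pow two_ne_zero, add_zero]
  exact hsol.sqrt_energy_le hc hT hθ0 hθ1 hτ hsmall

/-- Wellposedness of one step of the θ-scheme (Problem A): existence,
uniqueness, divergence-free magnetic flux and a stability bound uniform in τ
and in the mesh. -/
theorem wellposedness_problem_A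
    {E V P : Type*}
    [NormedAddCommGroup E] [InnerProductSpace ℝ E] [FiniteDimensional ℝ E]
    [NormedAddCommGroup V] [InnerProductSpace ℝ V] [FiniteDimensional ℝ V]
    [NormedAddCommGroup P] [InnerProductSpace ℝ P] [FiniteDimensional ℝ P]
    (R : V →ₗ[ℝ] E) (D : E →ₗ[ℝ] P) (hDR : D ∘ₗ R = 0)
    (T : E →ₗ[ℝ] V) (c C_P : ℝ) (hc : 0 ≤ c) (hCP : 0 ≤ C_P)
    (hT : ∀ B : E, ‖T B‖ ≤ c * ‖B‖)
    (hPoincare : ∀ v : V, ‖v‖ ≤ C_P * ‖R v‖)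
    (θ : ℝ) (hθ0 : 0 < θ) (hθ1 : θ ≤ 1)
    (τ : ℝ) (hτ : 0 < τ) (hsmall : c * Real.sqrt τ < 1) :
    ∀ F : E, D F = 0 → ∀ g : V →ₗ[ℝ] ℝ,
      (∃! ξ : E × V,
        (∀ w : E, τ⁻¹ * ⟪ξ.1, w⟫ + ⟪R ξ.2, w⟫ = ⟪F, w⟫) ∧
        (∀ v : V, ⟪ξ.2, v⟫ + θ * ⟪T ξ.1, v⟫ - θ * ⟪ξ.1, R v⟫ = g v)) ∧
      (∀ (B : E) (e : V),
        ((∀ w : E, τ⁻¹ * ⟪B, w⟫ + ⟪R e, w⟫ = ⟪F, w⟫) ∧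
         (∀ v : V, ⟪e, v⟫ + θ * ⟪T B, v⟫ - θ * ⟪B, R v⟫ = g v)) →
        D B = 0 ∧
        Real.sqrt (‖e‖ ^ 2 + τ * ‖R e‖ ^ 2 + τ⁻¹ * ‖B‖ ^ 2 + ‖D B‖ ^ 2)
          ≤ ((1 - c * Real.sqrt τ) * (θ / 2) * (Real.sqrt (1 + θ ^ 2 / 2))⁻¹)⁻¹ *
              (Real.sqrt τ * ‖F‖ + ‖LinearMap.toContinuousLinearMap g‖)) :=
  wellposedness_problem_A_general R D hDR T c hc hT θ hθ0 hθ1 τ hτ hsmall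
end

section
/- Let E, V be real inner product spaces, R : V →ₗ[ℝ] E a linear map, T : E →ₗ[ℝ] V a linear map with ‖T x‖_V ≤ c‖x‖_E for all x ∈ E (c ≥ 0), θ ∈ [0,1] and τ > 0. Let B, B' ∈ E, ê, e₀ ∈ V and set B^θ = θ • B' + (1-θ) • B. Assume: (Faraday) for all w ∈ E, ⟪τ⁻¹ • (B' - B), w⟫_E + ⟪R ê, w⟫_E = -⟪R e₀, w⟫_E; and (Ampère–Ohm) for all v ∈ V, ⟪ê, v⟫_V + ⟪T B^θ, v⟫_V - ⟪B^θ, R v⟫_E = -⟪e₀, v⟫_V. Then (2θ - 1)·τ⁻¹·‖B' - B‖_E² + τ⁻¹·(‖B'‖_E² - ‖B‖_E²) + ‖ê‖_V² ≤ 2(‖e₀‖_V² + ‖R e₀‖_E²) + (1 + 4c²)·(θ‖B'‖_E² + (1-θ)‖B‖_E²). -/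
open RealInnerProductSpace

set_option maxHeartbeats 1000000 in
/-- One-step discrete energy estimate for the θ-scheme (part (i) of the
discrete energy estimate theorem, with explicit constants). -/
theorem one_step_discrete_energy_estimate
    {E V : Type*}
    [NormedAddCommGroup E] [InnerProductSpace ℝ E]
    [NormedAddCommGroup V] [InnerProductSpace ℝ V]
    (R : V →ₗ[ℝ] E) (T : E →ₗ[ℝ] V) (c : ℝ) (hc : 0 ≤ c)
    (hT : ∀ x : E, ‖T x‖ ≤ c * ‖x‖)
    (θ : ℝ) (hθ : θ ∈ Set.Icc (0 : ℝ) 1) (τ : ℝ) (hτ : 0 < τ)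
    (B B' : E) (ehat e0 : V)
    (hFaraday : ∀ w : E, ⟪τ⁻¹ • (B' - B), w⟫ + ⟪R ehat, w⟫ = -⟪R e0, w⟫)
    (hAmpereOhm : ∀ v : V,
      ⟪ehat, v⟫ + ⟪T (θ • B' + (1 - θ) • B), v⟫ - ⟪θ • B' + (1 - θ) • B, R v⟫
        = -⟪e0, v⟫) :
    (2 * θ - 1) * τ⁻¹ * ‖B' - B‖ ^ 2 + τ⁻¹ * (‖B'‖ ^ 2 - ‖B‖ ^ 2) + ‖ehat‖ ^ 2
      ≤ 2 * (‖e0‖ ^ 2 + ‖R e0‖ ^ 2)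
        + (1 + 4 * c ^ 2) * (θ * ‖B'‖ ^ 2 + (1 - θ) * ‖B‖ ^ 2) := by
  obtain ⟨hθ0, hθ1⟩ := hθ
  set Bθ : E := θ • B' + (1 - θ) • B with hBθ
  have h1 := hFaraday Bθ
  have h2 := hAmpereOhm ehat
  rw [real_inner_smul_left] at h1
  have hcomm : ⟪Bθ, R ehat⟫ = ⟪R ehat, Bθ⟫ := real_inner_comm _ _
  have hee : ⟪ehat, ehat⟫ = ‖ehat‖ ^ 2 := real_inner_self_eq_norm_sq _
  -- sum of the two tested equations
  have hsum : τ⁻¹ * ⟪B' - B, Bθ⟫ + ‖ehat‖ ^ 2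
      = -⟪R e0, Bθ⟫ - ⟪T Bθ, ehat⟫ - ⟪e0, ehat⟫ := by
    have := h2
    rw [hcomm, hee] at this
    linarith [h1, this]
  -- polarization-type identity
  have hid : 2 * ⟪B' - B, Bθ⟫
      = ‖B'‖ ^ 2 - ‖B‖ ^ 2 + (2 * θ - 1) * ‖B' - B‖ ^ 2 := by
    have hn : ‖B' - B‖ ^ 2 = ‖B'‖ ^ 2 - 2 * ⟪B', B⟫ + ‖B‖ ^ 2 :=
      norm_sub_sq_real B' B
    have hexp : ⟪B' - B, Bθ⟫
        = θ * ‖B'‖ ^ 2 - (1 - θ) * ‖B‖ ^ 2 + (1 - 2 * θ) * ⟪B', B⟫ := by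
      simp only [hBθ, inner_sub_left, inner_add_right, real_inner_smul_right,
        real_inner_self_eq_norm_sq, real_inner_comm B B']
      ring
    rw [hexp, hn]; ring
  -- Cauchy–Schwarz bounds
  have cs1 : -⟪R e0, Bθ⟫ ≤ ‖R e0‖ * ‖Bθ‖ := by
    have := abs_real_inner_le_norm (R e0) Bθ
    cases abs_le.mp this with
    | intro hl hr => linarith
  have cs2 : -⟪T Bθ, ehat⟫ ≤ c * ‖Bθ‖ * ‖ehat‖ := by
    have h := abs_real_inner_le_norm (T Bθ) ehat
    have h' : ‖T Bθ‖ * ‖ehat‖ ≤ c * ‖Bθ‖ * ‖ehat‖ :=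
      mul_le_mul_of_nonneg_right (hT Bθ) (norm_nonneg _)
    cases abs_le.mp h with
    | intro hl hr => linarith
  have cs3 : -⟪e0, ehat⟫ ≤ ‖e0‖ * ‖ehat‖ := by
    have := abs_real_inner_le_norm e0 ehat
    cases abs_le.mp this with
    | intro hl hr => linarith
  -- convexity bound for ‖Bθ‖²
  have hconv : ‖Bθ‖ ^ 2 ≤ θ * ‖B'‖ ^ 2 + (1 - θ) * ‖B‖ ^ 2 := by
    have htri : ‖Bθ‖ ≤ θ * ‖B'‖ + (1 - θ) * ‖B‖ := by
      calc ‖Bθ‖ ≤ ‖θ • B'‖ + ‖(1 - θ) • B‖ := norm_add_le _ _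
      _ = θ * ‖B'‖ + (1 - θ) * ‖B‖ := by
          rw [norm_smul, norm_smul, Real.norm_eq_abs, Real.norm_eq_abs,
            abs_of_nonneg hθ0, abs_of_nonneg (by linarith)]
    have hsq : ‖Bθ‖ ^ 2 ≤ (θ * ‖B'‖ + (1 - θ) * ‖B‖) ^ 2 := by
      have h0 : (0:ℝ) ≤ ‖Bθ‖ := norm_nonneg _
      nlinarith [htri]
    nlinarith [hsq, mul_nonneg (mul_nonneg hθ0 (by linarith : (0:ℝ) ≤ 1 - θ))
      (sq_nonneg (‖B'‖ - ‖B‖))]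
  have hτi : 0 < τ⁻¹ := inv_pos.mpr hτ
  -- combine
  have key : (2 * θ - 1) * τ⁻¹ * ‖B' - B‖ ^ 2 + τ⁻¹ * (‖B'‖ ^ 2 - ‖B‖ ^ 2)
      + ‖ehat‖ ^ 2
      = 2 * (-⟪R e0, Bθ⟫ - ⟪T Bθ, ehat⟫ - ⟪e0, ehat⟫) - ‖ehat‖ ^ 2 := by
    linear_combination 2 * hsum - τ⁻¹ * hid
  rw [key]
  have b1 : 2 * (‖R e0‖ * ‖Bθ‖) ≤ 2 * ‖R e0‖ ^ 2 + (1/2) * ‖Bθ‖ ^ 2 := by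
    nlinarith [sq_nonneg (2 * ‖R e0‖ - ‖Bθ‖)]
  have b2 : 2 * (c * ‖Bθ‖ * ‖ehat‖) ≤ 2 * (c * ‖Bθ‖) ^ 2 + (1/2) * ‖ehat‖ ^ 2 := by
    nlinarith [sq_nonneg (2 * (c * ‖Bθ‖) - ‖ehat‖)]
  have b3 : 2 * (‖e0‖ * ‖ehat‖) ≤ 2 * ‖e0‖ ^ 2 + (1/2) * ‖ehat‖ ^ 2 := by
    nlinarith [sq_nonneg (2 * ‖e0‖ - ‖ehat‖)]
  have hXnn : (0:ℝ) ≤ θ * ‖B'‖ ^ 2 + (1 - θ) * ‖B‖ ^ 2 := by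
    have h1 := sq_nonneg ‖B'‖
    have h2 := sq_nonneg ‖B‖
    nlinarith
  have hX : (1/2) * ‖Bθ‖ ^ 2 + 2 * (c ^ 2 * ‖Bθ‖ ^ 2)
      ≤ (1 + 4 * c ^ 2) * (θ * ‖B'‖ ^ 2 + (1 - θ) * ‖B‖ ^ 2) := by
    have hc2 : (0:ℝ) ≤ c ^ 2 := sq_nonneg c
    have m1 := mul_le_mul_of_nonneg_left hconv hc2
    nlinarith [hconv, m1, hXnn, mul_nonneg hc2 hXnn]
  have hmp : (c * ‖Bθ‖) ^ 2 = c ^ 2 * ‖Bθ‖ ^ 2 := by ring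
  linarith [b1, b2, b3, hX, cs1, cs2, cs3, hmp]
end

section
/- Let Δt > 0, Q > 0 and θ ∈ [0,1] with Q·θ < 1, and let x, y, g : ℕ → ℝ with y(m) ≥ 0 and g(m) ≥ 0 for all m, satisfying for all m: x(m+1) - x(m) + (Δt/2)·y(m) ≤ Δt·g(m) + Q·(θ·x(m+1) + (1-θ)·x(m)). Set β = (1 - Qθ)/(1 + Q(1-θ)) and γ = 1/(1 - Qθ). Then for every n: β^{n+1}·x(n+1) + (γΔt/2)·∑_{ℓ=0}^{n} β^{n+1-ℓ}·y(n-ℓ) ≤ x(0) + γΔt·∑_{ℓ=0}^{n} β^{n+1-ℓ}·g(n-ℓ). -/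
/-- Real-sequence form of part (ii) of the discrete energy estimate theorem:
from the one-step inequality one deduces the summed, exponentially weighted
energy estimate. -/
theorem discrete_energy_estimate_sequence
    (Δt Q θ : ℝ) (hΔt : 0 < Δt) (hQ : 0 < Q)
    (hθ : θ ∈ Set.Icc (0 : ℝ) 1) (hQθ : Q * θ < 1)
    (x y g : ℕ → ℝ)
    (hy : ∀ m, 0 ≤ y m) (hg : ∀ m, 0 ≤ g m)
    (hstep : ∀ m, x (m + 1) - x m + (Δt / 2) * y m
      ≤ Δt * g m + Q * (θ * x (m + 1) + (1 - θ) * x m)) :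
    ∀ n : ℕ,
      ((1 - Q * θ) / (1 + Q * (1 - θ))) ^ (n + 1) * x (n + 1)
        + ((1 - Q * θ)⁻¹ * Δt / 2) *
            ∑ ℓ ∈ Finset.range (n + 1),
              ((1 - Q * θ) / (1 + Q * (1 - θ))) ^ (n + 1 - ℓ) * y (n - ℓ)
      ≤ x 0
        + (1 - Q * θ)⁻¹ * Δt *
            ∑ ℓ ∈ Finset.range (n + 1),
              ((1 - Q * θ) / (1 + Q * (1 - θ))) ^ (n + 1 - ℓ) * g (n - ℓ) := by
  obtain ⟨hθ0, hθ1⟩ := hθ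
  set a : ℝ := 1 - Q * θ with ha
  set d : ℝ := 1 + Q * (1 - θ) with hd
  have hapos : 0 < a := by simp only [ha]; linarith
  have hdpos : 0 < d := by
    have : 0 ≤ Q * (1 - θ) := mul_nonneg hQ.le (by linarith)
    simp only [hd]; linarith
  set b : ℝ := a / d with hb
  have hbpos : 0 < b := div_pos hapos hdpos
  -- reindex the sums
  have reindex : ∀ (f : ℕ → ℝ) (n : ℕ),
      (∑ ℓ ∈ Finset.range (n + 1), b ^ (n + 1 - ℓ) * f (n - ℓ))
        = ∑ k ∈ Finset.range (n + 1), b ^ (k + 1) * f k := by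
    intro f n
    rw [← Finset.sum_range_reflect (fun k => b ^ (k + 1) * f k) (n + 1)]
    apply Finset.sum_congr rfl
    intro ℓ hℓ
    have hle : ℓ ≤ n := Nat.lt_succ_iff.mp (Finset.mem_range.mp hℓ)
    have h1 : n + 1 - ℓ = (n - ℓ) + 1 := by omega
    have h2 : n + 1 - 1 - ℓ = n - ℓ := by omega
    rw [h1, h2]
  -- per-step inequality in weighted form
  have key : ∀ m : ℕ,
      b ^ (m + 1) * x (m + 1) + (a⁻¹ * Δt / 2) * (b ^ (m + 1) * y m)
        ≤ b ^ m * x m + a⁻¹ * Δt * (b ^ (m + 1) * g m) := by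
    intro m
    have h := hstep m
    have h' : a * x (m + 1) + (Δt / 2) * y m ≤ d * x m + Δt * g m := by
      simp only [ha, hd]; nlinarith [h]
    have hc : 0 < a⁻¹ * b ^ (m + 1) :=
      mul_pos (inv_pos.mpr hapos) (pow_pos hbpos _)
    have h'' := mul_le_mul_of_nonneg_left h' hc.le
    have hab : a⁻¹ * b ^ (m + 1) * (a * x (m + 1)) = b ^ (m + 1) * x (m + 1) := by
      field_simp
    have hdb : a⁻¹ * b ^ (m + 1) * (d * x m) = b ^ m * x m := by
      rw [pow_succ]
      simp only [hb]
      field_simp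
    calc b ^ (m + 1) * x (m + 1) + (a⁻¹ * Δt / 2) * (b ^ (m + 1) * y m)
        = a⁻¹ * b ^ (m + 1) * (a * x (m + 1) + (Δt / 2) * y m) := by
          rw [mul_add, hab]; ring
      _ ≤ a⁻¹ * b ^ (m + 1) * (d * x m + Δt * g m) := h''
      _ = b ^ m * x m + a⁻¹ * Δt * (b ^ (m + 1) * g m) := by
          rw [mul_add, hdb]; ring
  intro n
  rw [reindex y n, reindex g n]
  induction n with
  | zero =>
    have := key 0
    simpa using this
  | succ n ih =>
    rw [Finset.sum_range_succ (fun k => b ^ (k + 1) * y k) (n + 1),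
      Finset.sum_range_succ (fun k => b ^ (k + 1) * g k) (n + 1)]
    have hk := key (n + 1)
    have := add_le_add ih hk
    calc b ^ (n + 1 + 1) * x (n + 1 + 1)
          + (a⁻¹ * Δt / 2) * ((∑ k ∈ Finset.range (n + 1), b ^ (k + 1) * y k)
              + b ^ (n + 1 + 1) * y (n + 1))
        = (b ^ (n + 1) * x (n + 1)
            + (a⁻¹ * Δt / 2) * ∑ k ∈ Finset.range (n + 1), b ^ (k + 1) * y k)
          + (b ^ (n + 1 + 1) * x (n + 1 + 1)
              + (a⁻¹ * Δt / 2) * (b ^ (n + 1 + 1) * y (n + 1)))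
          - b ^ (n + 1) * x (n + 1) := by ring
      _ ≤ (x 0 + a⁻¹ * Δt * ∑ k ∈ Finset.range (n + 1), b ^ (k + 1) * g k)
          + (b ^ (n + 1) * x (n + 1)
              + a⁻¹ * Δt * (b ^ (n + 1 + 1) * g (n + 1)))
          - b ^ (n + 1) * x (n + 1) := by linarith
      _ = x 0 + a⁻¹ * Δt * ((∑ k ∈ Finset.range (n + 1), b ^ (k + 1) * g k)
              + b ^ (n + 1 + 1) * g (n + 1)) := by ring
end
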